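/- (Deviation of the L-SVRG estimator from the optimal gradients.) For i = 1, …, n and l = 1, …, m let f_{il} : ℝ^d → ℝ be convex and differentiable with L_{il}-Lipschitz gradient; set f_i = (1/m) Σ_{l=1}^m f_{il}, f = (1/n) Σ_{i=1}^n f_i, and 𝓛 = 4 max_{i,l} L_{il}, and let x* be a global minimizer of f. Then for all x, w_1, …, w_n ∈ ℝ^d: (1/n) Σ_{i=1}^n (1/m) Σ_{l=1}^m ‖∇f_{il}(x) − ∇f_{il}(w_i) + ∇f_i(w_i) − ∇f_i(x*)‖² ≤ 4 σ₁ + 3 𝓛 (f(x) − f(x*)), where σ₁ = (1/(mn)) Σ_{i=1}^n Σ_{l=1}^m ‖∇f_{il}(w_i) − ∇f_{il}(x*)‖². -/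

import Mathlib

/-!
Write the summand as `a - (b - b̄)` with `a = ∇f_{il}(x) - ∇f_{il}(x*)`,
`b = ∇f_{il}(w_i) - ∇f_{il}(x*)` and `b̄` the mean of `b` over `l`. Young's inequality and the
variance bound control its mean square by `2‖a‖² + 2‖b‖²`. Cocoercivity bounds `‖a‖²` by
`4 L_{il} D_{il}`, where `D_{il}` is the Bregman divergence of `f_{il}` between `x` and `x*`; since
`∇f(x*) = 0`, the average of the `D_{il}` is exactly `f(x) - f(x*)`.
-/

open Finset InnerProductSpace

section Variance

variable {E : Type*} [NormedAddCommGroup E] [InnerProductSpace ℝ E] {ι : Type*}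

theorem sum_norm_sub_average_sq_le (s : Finset ι) (u : ι → E) :
    ∑ l ∈ s, ‖u l - (#s : ℝ)⁻¹ • ∑ k ∈ s, u k‖ ^ 2 ≤ ∑ l ∈ s, ‖u l‖ ^ 2 := by
  set ū := (#s : ℝ)⁻¹ • ∑ k ∈ s, u k
  have hsum : ∑ k ∈ s, u k = (#s : ℝ) • ū := by
    rcases s.eq_empty_or_nonempty with rfl | hs
    · simp
    · rw [smul_smul, mul_inv_cancel₀ (by positivity), one_smul]
  clear_value ū
  have hexpand : ∑ l ∈ s, ‖u l - ū‖ ^ 2 = ∑ l ∈ s, ‖u l‖ ^ 2 - #s * ‖ū‖ ^ 2 := by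
    simp only [norm_sub_sq_real, sum_add_distrib, sum_sub_distrib, ← mul_sum, ← sum_inner, hsum,
      real_inner_smul_left, real_inner_self_eq_norm_sq, sum_const, nsmul_eq_mul]
    ring
  rw [hexpand]
  exact sub_le_self _ (by positivity)

theorem sum_norm_sub_sub_average_sq_le (s : Finset ι) (a b : ι → E) :
    ∑ l ∈ s, ‖a l - (b l - (#s : ℝ)⁻¹ • ∑ k ∈ s, b k)‖ ^ 2 ≤
      2 * ∑ l ∈ s, ‖a l‖ ^ 2 + 2 * ∑ l ∈ s, ‖b l‖ ^ 2 := by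
  set avg := (#s : ℝ)⁻¹ • ∑ k ∈ s, b k
  calc ∑ l ∈ s, ‖a l - (b l - avg)‖ ^ 2
      ≤ ∑ l ∈ s, 2 * (‖a l‖ ^ 2 + ‖b l - avg‖ ^ 2) := sum_le_sum fun l _ =>
        (le_add_of_nonneg_left (sq_nonneg _)).trans_eq (parallelogram_law_with_norm ℝ _ _)
    _ = 2 * ∑ l ∈ s, ‖a l‖ ^ 2 + 2 * ∑ l ∈ s, ‖b l - avg‖ ^ 2 := by
      rw [← mul_sum, sum_add_distrib, mul_add]
    _ ≤ 2 * ∑ l ∈ s, ‖a l‖ ^ 2 + 2 * ∑ l ∈ s, ‖b l‖ ^ 2 := by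
      gcongr _ + 2 * ?_
      exact sum_norm_sub_average_sq_le s b

end Variance

section Gradient

variable {E : Type*} [NormedAddCommGroup E] [InnerProductSpace ℝ E] [CompleteSpace E]

noncomputable def bregman (f : E → ℝ) (x y : E) : ℝ :=
  f x - f y - ⟪gradient f y, x - y⟫_ℝ

theorem hasGradientAt_mul_sum {ι : Type*} (s : Finset ι) (c : ℝ) {g : ι → E → ℝ} {x : E}
    (hg : ∀ i ∈ s, DifferentiableAt ℝ (g i) x) :
    HasGradientAt (fun z => c * ∑ i ∈ s, g i z) (c • ∑ i ∈ s, gradient (g i) x) x := by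
  rw [hasGradientAt_iff_hasFDerivAt, map_smul, map_sum]
  simp only [toDual_gradient]
  exact (HasFDerivAt.fun_sum fun i hi => (hg i hi).hasFDerivAt).const_mul c

theorem bregman_mul_sum {ι : Type*} (s : Finset ι) (c : ℝ) {g : ι → E → ℝ} (x : E) {y : E}
    (hg : ∀ i ∈ s, DifferentiableAt ℝ (g i) y) :
    bregman (fun z => c * ∑ i ∈ s, g i z) x y = c * ∑ i ∈ s, bregman (g i) x y := by
  simp only [bregman, (hasGradientAt_mul_sum s c hg).gradient, real_inner_smul_left, sum_inner,
    sum_sub_distrib]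
  ring

theorem IsLocalMin.bregman_eq_sub {f : E → ℝ} {y : E} (hy : IsLocalMin f y) (x : E) :
    bregman f x y = f x - f y := by
  simp [bregman, gradient, hy.fderiv_eq_zero]

theorem ConvexOn.bregman_nonneg {f : E → ℝ} (hf : ConvexOn ℝ Set.univ f) (x : E) {y : E}
    (hy : DifferentiableAt ℝ f y) : 0 ≤ bregman f x y := by
  have hline : HasDerivAt (fun t : ℝ => f (y + t • (x - y))) ⟪gradient f y, x - y⟫_ℝ 0 := by
    have hpath : HasDerivAt (fun t : ℝ => y + t • (x - y)) (x - y) 0 := by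
      simpa using ((hasDerivAt_id (0 : ℝ)).smul_const (x - y)).const_add y
    rw [inner_gradient_left]
    exact hy.hasFDerivAt.comp_hasDerivAt_of_eq 0 hpath (by simp)
  have hconv : ConvexOn ℝ Set.univ (fun t : ℝ => f (y + t • (x - y))) := by
    simpa [AffineMap.lineMap_apply, add_comm, Function.comp_def] using
      hf.comp_affineMap (AffineMap.lineMap y x)
  have := hconv.le_slope_of_hasDerivAt (Set.mem_univ 0) (Set.mem_univ 1) one_pos hline
  simpa [bregman, slope_def_field, le_sub_iff_add_le'] using this

-- The mean value inequality only gives the constant `L`, not the sharp `L / 2`; this costs the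
-- factor `4` (instead of `2`) in the cocoercivity bound below.
theorem bregman_le_mul_norm_sq {f : E → ℝ} {L : NNReal} (hf : Differentiable ℝ f)
    (hL : LipschitzWith L (gradient f)) (x y : E) : bregman f x y ≤ L * ‖x - y‖ ^ 2 := by
  have hfderiv : ∀ u ∈ Metric.closedBall y ‖x - y‖,
      ‖fderiv ℝ f u - fderiv ℝ f y‖ ≤ L * ‖x - y‖ := by
    intro u hu
    rw [← toDual_gradient, ← toDual_gradient, ← map_sub, LinearIsometryEquiv.norm_map,
      ← dist_eq_norm]
    exact (hL.dist_le_mul u y).trans (by gcongr; exact hu)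
  have hmv : ‖f x - f y - fderiv ℝ f y (x - y)‖ ≤ L * ‖x - y‖ * ‖x - y‖ :=
    (convex_closedBall y ‖x - y‖).norm_image_sub_le_of_norm_fderiv_le' (fun u _ => hf u) hfderiv
      (Metric.mem_closedBall_self (norm_nonneg _)) (by simp [dist_eq_norm])
  rw [bregman, inner_gradient_left, sq, ← mul_assoc]
  exact (le_abs_self _).trans hmv

theorem bregman_three_point (f : E → ℝ) (x y z : E) :
    bregman f x y = bregman f z y - bregman f z x - ⟪gradient f x - gradient f y, z - x⟫_ℝ := by
  simp only [bregman, inner_sub_left, inner_sub_right]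
  ring

theorem norm_gradient_sub_sq_le_bregman {f : E → ℝ} {L : NNReal} (hconv : ConvexOn ℝ Set.univ f)
    (hf : Differentiable ℝ f) (hL : LipschitzWith L (gradient f)) (x y : E) :
    ‖gradient f x - gradient f y‖ ^ 2 ≤ 4 * L * bregman f x y := by
  set v := gradient f x - gradient f y
  rcases L.coe_nonneg.eq_or_lt with hL0 | hLpos
  · have hv0 : v = 0 := by
      have := hL.dist_le_mul x y
      rw [← hL0, zero_mul, dist_le_zero] at this
      exact sub_eq_zero.mpr this
    simp [hv0, ← hL0]
  · -- three-point identity at the gradient step `z = x - (2L)⁻¹ v`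
    set c : ℝ := (2 * L)⁻¹
    have hbzy := hconv.bregman_nonneg (x - c • v) (hf y)
    have hbzx := bregman_le_mul_norm_sq hf hL (x - c • v) x
    rw [bregman_three_point f x y (x - c • v)]
    rw [sub_sub_cancel_left, norm_neg, norm_smul, Real.norm_of_nonneg (by positivity)] at hbzx
    rw [sub_sub_cancel_left, inner_neg_right, real_inner_smul_right, real_inner_self_eq_norm_sq]
    have hc : 4 * L * (c - L * c ^ 2) = 1 := by simp only [c]; field_simp; ring
    nlinarith [sq_nonneg ‖v‖]

theorem mul_sum_mul_sum_bregman_eq_sub {ι κ : Type*} {s : Finset ι} {t : Finset κ} {a b : ℝ}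
    {g : ι → κ → E → ℝ} {F : E → ℝ} (hF : ∀ z, F z = a * ∑ i ∈ s, b * ∑ l ∈ t, g i l z) {y : E}
    (hg : ∀ i ∈ s, ∀ l ∈ t, DifferentiableAt ℝ (g i l) y) (hy : IsLocalMin F y) (x : E) :
    a * ∑ i ∈ s, b * ∑ l ∈ t, bregman (g i l) x y = F x - F y := by
  obtain rfl := funext hF
  rw [← hy.bregman_eq_sub x,
    bregman_mul_sum s a x fun i hi => (hasGradientAt_mul_sum t b (hg i hi)).differentiableAt]
  exact congrArg (a * ·) (sum_congr rfl fun i hi => (bregman_mul_sum t b x (hg i hi)).symm)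

theorem sum_norm_gradient_sub_add_gradient_average_sq_le {κ : Type*} (s : Finset κ)
    {g : κ → E → ℝ} (x w y : E) (hw : ∀ l ∈ s, DifferentiableAt ℝ (g l) w)
    (hy : ∀ l ∈ s, DifferentiableAt ℝ (g l) y) :
    ∑ l ∈ s, ‖gradient (g l) x - gradient (g l) w +
        gradient (fun z => (#s : ℝ)⁻¹ * ∑ k ∈ s, g k z) w -
        gradient (fun z => (#s : ℝ)⁻¹ * ∑ k ∈ s, g k z) y‖ ^ 2 ≤
      2 * ∑ l ∈ s, ‖gradient (g l) x - gradient (g l) y‖ ^ 2 +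
        2 * ∑ l ∈ s, ‖gradient (g l) w - gradient (g l) y‖ ^ 2 := by
  refine le_of_eq_of_le (sum_congr rfl fun l _ => ?_) (sum_norm_sub_sub_average_sq_le s
    (fun l => gradient (g l) x - gradient (g l) y) (fun l => gradient (g l) w - gradient (g l) y))
  rw [(hasGradientAt_mul_sum _ _ hw).gradient, (hasGradientAt_mul_sum _ _ hy).gradient,
    sum_sub_distrib, smul_sub]
  congr 2
  abel

end Gradient

theorem stmt18_general (d n m : ℕ)
    (f : Fin n → Fin m → EuclideanSpace ℝ (Fin d) → ℝ)
    (L' : Fin n → Fin m → NNReal)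
    (hconv : ∀ i l, ConvexOn ℝ Set.univ (f i l))
    (hdiff : ∀ i l, Differentiable ℝ (f i l))
    (hlip : ∀ i l, LipschitzWith (L' i l) (fun x => gradient (f i l) x))
    (fi : Fin n → EuclideanSpace ℝ (Fin d) → ℝ)
    (hfi : ∀ i x, fi i x = (m : ℝ)⁻¹ * ∑ l, f i l x)
    (F : EuclideanSpace ℝ (Fin d) → ℝ)
    (hF : ∀ x, F x = (n : ℝ)⁻¹ * ∑ i, fi i x)
    (𝓛 : ℝ) (h𝓛 : 𝓛 = 4 * (univ.sup fun i => univ.sup fun l => L' i l : NNReal))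
    (xs : EuclideanSpace ℝ (Fin d)) (hmin : ∀ y, F xs ≤ F y) :
    ∀ (x : EuclideanSpace ℝ (Fin d)) (w : Fin n → EuclideanSpace ℝ (Fin d)),
      (n : ℝ)⁻¹ * ∑ i, (m : ℝ)⁻¹ * ∑ l,
        ‖gradient (f i l) x - gradient (f i l) (w i) +
          gradient (fi i) (w i) - gradient (fi i) xs‖ ^ 2 ≤
      4 * ((1 / (m * n : ℝ)) * ∑ i, ∑ l,
          ‖gradient (f i l) (w i) - gradient (f i l) xs‖ ^ 2) +
        3 * 𝓛 * (F x - F xs) := by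
  intro x w
  obtain rfl : fi = fun i z => (m : ℝ)⁻¹ * ∑ l, f i l z := funext₂ hfi
  have hgap : (n : ℝ)⁻¹ * ∑ i, (m : ℝ)⁻¹ * ∑ l, bregman (f i l) x xs = F x - F xs :=
    mul_sum_mul_sum_bregman_eq_sub hF (fun i _ l _ => hdiff i l xs)
      (Filter.Eventually.of_forall hmin) x
  have hcoco : ∀ i l, ‖gradient (f i l) x - gradient (f i l) xs‖ ^ 2 ≤
      𝓛 * bregman (f i l) x xs := fun i l => by
    rw [h𝓛]
    exact norm_gradient_sub_sq_le_bregman (hconv i l) (hdiff i l)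
      ((hlip i l).weaken (le_sup_of_le (mem_univ i) (le_sup (mem_univ l)))) x xs
  have hdev := fun i => sum_norm_gradient_sub_add_gradient_average_sq_le univ x (w i) xs
    (fun l _ => hdiff i l (w i)) (fun l _ => hdiff i l xs)
  simp only [card_univ, Fintype.card_fin] at hdev
  have h𝓛gap : 0 ≤ 𝓛 * (F x - F xs) :=
    mul_nonneg (by rw [h𝓛]; positivity) (sub_nonneg.2 (hmin x))
  have hσ : 0 ≤ 1 / (m * n : ℝ) * ∑ i, ∑ l, ‖gradient (f i l) (w i) - gradient (f i l) xs‖ ^ 2 := by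
    positivity
  calc _ ≤ (n : ℝ)⁻¹ * ∑ i, (m : ℝ)⁻¹ * (2 * ∑ l, 𝓛 * bregman (f i l) x xs +
        2 * ∑ l, ‖gradient (f i l) (w i) - gradient (f i l) xs‖ ^ 2) := by
        gcongr with i
        refine (hdev i).trans ?_
        gcongr with l
        exact hcoco i l
    _ = 2 * 𝓛 * (F x - F xs) +
        2 * (1 / (m * n : ℝ) * ∑ i, ∑ l, ‖gradient (f i l) (w i) - gradient (f i l) xs‖ ^ 2) := by
      rw [← hgap]
      simp only [mul_add, sum_add_distrib, mul_sum, one_div, mul_inv]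
      congr 1 <;> refine sum_congr rfl fun i _ => sum_congr rfl fun l _ => by ring
    _ ≤ _ := by linarith

/-- (Deviation of the L-SVRG estimator from the optimal gradients.) -/
theorem stmt18 (d n m : ℕ) (hn : 0 < n) (hm : 0 < m)
    (f : Fin n → Fin m → EuclideanSpace ℝ (Fin d) → ℝ)
    (L' : Fin n → Fin m → NNReal)
    (hconv : ∀ i l, ConvexOn ℝ Set.univ (f i l))
    (hdiff : ∀ i l, Differentiable ℝ (f i l))
    (hlip : ∀ i l, LipschitzWith (L' i l) (fun x => gradient (f i l) x))
    (fi : Fin n → EuclideanSpace ℝ (Fin d) → ℝ)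
    (hfi : ∀ i x, fi i x = (m : ℝ)⁻¹ * ∑ l, f i l x)
    (F : EuclideanSpace ℝ (Fin d) → ℝ)
    (hF : ∀ x, F x = (n : ℝ)⁻¹ * ∑ i, fi i x)
    (𝓛 : ℝ) (h𝓛 : 𝓛 = 4 * (univ.sup fun i => univ.sup fun l => L' i l : NNReal))
    (xs : EuclideanSpace ℝ (Fin d)) (hmin : ∀ y, F xs ≤ F y) :
    ∀ (x : EuclideanSpace ℝ (Fin d)) (w : Fin n → EuclideanSpace ℝ (Fin d)),
      (n : ℝ)⁻¹ * ∑ i, (m : ℝ)⁻¹ * ∑ l,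
        ‖gradient (f i l) x - gradient (f i l) (w i) +
          gradient (fi i) (w i) - gradient (fi i) xs‖ ^ 2 ≤
      4 * ((1 / (m * n : ℝ)) * ∑ i, ∑ l,
          ‖gradient (f i l) (w i) - gradient (f i l) xs‖ ^ 2) +
        3 * 𝓛 * (F x - F xs) :=
  stmt18_general d n m f L' hconv hdiff hlip fi hfi F hF 𝓛 h𝓛 xs hmin
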